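/- arXiv:nlin/0504026 — 3 statements merged into one kernel-verified Lean document; each statement's English description precedes it below -/
import Mathlib

section
/- Let F be a subset of the positive reals with infinite logarithmic measure (i.e. ∫_F dt/t = ∞), let s > 0, and suppose (r_n) is a sequence in F with r_{n+1} ≥ r_n + s for all n and F ⊆ ⋃_n [r_n, r_n + s]. Then there exist infinitely many indices n with r_n ≤ n². -/
open MeasureTheory Set

/-- If `F ⊆ (0,∞)` has infinite logarithmic measure, `s > 0`, and `(r n)` is a
sequence in `F` with `r (n+1) ≥ r n + s` and `F ⊆ ⋃ n, [r n, r n + s]`, then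
there are infinitely many `n` with `r n ≤ n²`. -/
theorem stmt_0 (F : Set ℝ) (hFpos : F ⊆ Set.Ioi (0 : ℝ))
    (hF : ∫⁻ t in F, ENNReal.ofReal (1 / t) = ⊤)
    (s : ℝ) (hs : 0 < s) (r : ℕ → ℝ)
    (hrF : ∀ n, r n ∈ F)
    (hstep : ∀ n, r n + s ≤ r (n + 1))
    (hcover : F ⊆ ⋃ n, Set.Icc (r n) (r n + s)) :
    {n : ℕ | r n ≤ (n : ℝ) ^ 2}.Infinite := by
  by_contra h
  rw [Set.not_infinite] at h
  have hrpos : ∀ n, 0 < r n := fun n => hFpos (hrF n)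
  have key : ∫⁻ t in F, ENNReal.ofReal (1 / t) ≤ ∑' n, ENNReal.ofReal (s / r n) := by
    calc ∫⁻ t in F, ENNReal.ofReal (1 / t)
        ≤ ∫⁻ t in ⋃ n, Set.Icc (r n) (r n + s), ENNReal.ofReal (1 / t) :=
          lintegral_mono_set hcover
      _ ≤ ∑' n, ∫⁻ t in Set.Icc (r n) (r n + s), ENNReal.ofReal (1 / t) :=
          lintegral_iUnion_le _ _
      _ ≤ ∑' n, ENNReal.ofReal (s / r n) := by
          refine ENNReal.tsum_le_tsum fun n => ?_
          have h1 : ∫⁻ t in Set.Icc (r n) (r n + s), ENNReal.ofReal (1 / t)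
              ≤ ∫⁻ _ in Set.Icc (r n) (r n + s), ENNReal.ofReal (1 / r n) := by
            refine setLIntegral_mono' measurableSet_Icc fun t ht => ?_
            exact ENNReal.ofReal_le_ofReal
              (one_div_le_one_div_of_le (hrpos n) ht.1)
          refine h1.trans ?_
          rw [setLIntegral_const, Real.volume_Icc, add_sub_cancel_left,
            ← ENNReal.ofReal_mul (one_div_nonneg.mpr (hrpos n).le), one_div_mul_eq_div]
  obtain ⟨N, hN⟩ := h.bddAbove
  have hlarge : ∀ n, N + 1 ≤ n → (n : ℝ) ^ 2 < r n := by
    intro n hn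
    by_contra hle
    push_neg at hle
    have : n ≤ N := hN hle
    omega
  have hsum2 : Summable (fun n : ℕ => s / (n : ℝ) ^ 2) := by
    have h2 : Summable (fun n : ℕ => 1 / (n : ℝ) ^ 2) :=
      Real.summable_one_div_nat_pow.mpr one_lt_two
    simpa [mul_one_div, div_eq_mul_inv] using h2.mul_left s
  have hsum : Summable (fun n : ℕ => s / r n) := by
    have hg : Summable (fun n : ℕ => s / ((n + (N + 1) : ℕ) : ℝ) ^ 2) :=
      (summable_nat_add_iff (f := fun n : ℕ => s / (n : ℝ) ^ 2) (N + 1)).mpr hsum2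
    have hf : Summable (fun n : ℕ => s / r (n + (N + 1))) := by
      refine hg.of_nonneg_of_le (fun n => div_nonneg hs.le (hrpos _).le) fun n => ?_
      have hpos : (0 : ℝ) < ((n + (N + 1) : ℕ) : ℝ) ^ 2 := by positivity
      exact div_le_div_of_nonneg_left hs.le hpos (hlarge _ (by omega)).le
    exact (summable_nat_add_iff (f := fun n : ℕ => s / r n) (N + 1)).mp hf
  have hne : ∑' n, ENNReal.ofReal (s / r n) ≠ ⊤ := by
    rw [← ENNReal.ofReal_tsum_of_nonneg (fun n => div_nonneg hs.le (hrpos n).le) hsum]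
    exact ENNReal.ofReal_ne_top
  exact hne (top_le_iff.mp (hF ▸ key))
end

section
/- Let w : ℤ → ℂ ∪ {∞} satisfy w(z+1) + w(z-1) = (a₁(z) w(z) + a₀(z))/(1 - w(z)²) wherever defined, and define U(z) = (w(z) - 1)(w(z+1) + 1). Then (U(z-1) + U(z) + a₁(z)) w(z) = U(z-1) - U(z) - a₀(z) at every z where w(z) is finite and w(z)² ≠ 1. -/
-- The two sides differ by exactly `a₁ w + a₀ - (wNext + wPrev) (1 - w²)`.
theorem dPII_substitution_identity {R : Type*} [CommRing R] {a₀ a₁ w wNext wPrev : R}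
    (h : (wNext + wPrev) * (1 - w ^ 2) = a₁ * w + a₀) :
    ((wPrev - 1) * (w + 1) + (w - 1) * (wNext + 1) + a₁) * w =
      (wPrev - 1) * (w + 1) - (w - 1) * (wNext + 1) - a₀ := by
  linear_combination -h

/-- If `w` satisfies `w(z+1) + w(z-1) = (a₁ w + a₀)/(1 - w²)` wherever
`w(z)² ≠ 1`, and `U(z) = (w(z) - 1)(w(z+1) + 1)`, then
`(U(z-1) + U(z) + a₁(z)) w(z) = U(z-1) - U(z) - a₀(z)` at each such point. -/
theorem stmt_12 (a₀ a₁ w U : ℤ → ℂ)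
    (heq : ∀ z : ℤ, (w z) ^ 2 ≠ 1 →
      w (z + 1) + w (z - 1) = (a₁ z * w z + a₀ z) / (1 - (w z) ^ 2))
    (hU : ∀ z : ℤ, U z = (w z - 1) * (w (z + 1) + 1)) :
    ∀ z : ℤ, (w z) ^ 2 ≠ 1 →
      (U (z - 1) + U z + a₁ z) * w z = U (z - 1) - U z - a₀ z := by
  intro z hz
  have hden : 1 - w z ^ 2 ≠ 0 := sub_ne_zero.mpr hz.symm
  rw [hU, hU, sub_add_cancel]
  exact dPII_substitution_identity ((eq_div_iff hden).mp (heq z hz))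
end

section
/- Suppose a nondecreasing function T : (0,∞) → (0,∞) satisfies T(r) ≤ (1 - ε') T(r+1) for some ε' > 0 and all r outside a set of finite logarithmic measure, where the complement has infinite logarithmic measure. Then limsup (log T(r))/(log r) = ∞. -/
open MeasureTheory

lemma key_window (E : Set ℝ) (hEfin : (∫⁻ t in E, ENNReal.ofReal (1 / t)) < ⊤)
    (η : ℝ) (hη : 0 < η) :
    ∃ R : ℝ, 2 / η + 1 ≤ R ∧ ∀ s, R ≤ s → ∃ x, x ∈ Set.Ioc (s + 1) (s * (1 + η)) ∧ x ∉ E := by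
  by_contra hcon
  push_neg at hcon
  have hstep : ∀ R : ℝ, ∃ s, max R (2 / η + 1) ≤ s ∧ Set.Ioc (s + 1) (s * (1 + η)) ⊆ E := by
    intro R
    obtain ⟨s, hs1, hs2⟩ := hcon (max R (2 / η + 1)) (le_max_right _ _)
    exact ⟨s, hs1, fun x hx => hs2 x hx⟩
  choose f hf1 hf2 using hstep
  set u : ℕ → ℝ := fun n => Nat.rec (f 0) (fun _ s => f (s * (1 + η))) n with hu
  have hu0 : u 0 = f 0 := rfl
  have huS : ∀ n, u (n + 1) = f (u n * (1 + η)) := fun n => rfl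
  have hu1 : ∀ n, 2 / η + 1 ≤ u n := by
    intro n
    cases n with
    | zero => exact le_trans (le_max_right _ _) (hf1 0)
    | succ m => rw [huS]; exact le_trans (le_max_right _ _) (hf1 _)
  have hupos : ∀ n, 0 < u n := by
    intro n
    have := hu1 n
    have : 0 < 2 / η := by positivity
    linarith [hu1 n]
  have hu2 : ∀ n, u n * (1 + η) ≤ u (n + 1) := by
    intro n; rw [huS]; exact le_trans (le_max_left _ _) (hf1 _)
  have humono : Monotone u := by
    apply monotone_nat_of_le_succ
    intro n
    have h1 : u n ≤ u n * (1 + η) := by nlinarith [hupos n]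
    exact h1.trans (hu2 n)
  set I : ℕ → Set ℝ := fun k => Set.Ioc (u k + 1) (u k * (1 + η)) with hI
  have hIE : ∀ k, I k ⊆ E := by
    intro k
    cases k with
    | zero => exact hf2 0
    | succ m => exact hf2 _
  have hdisj : Pairwise (Function.onFun Disjoint I) := by
    have key : ∀ k l, k < l → Disjoint (I k) (I l) := by
      intro k l hkl
      rw [hI]
      simp only
      rw [Set.Ioc_disjoint_Ioc]
      have h1 : u k * (1 + η) ≤ u (k + 1) := hu2 k
      have h2 : u (k + 1) ≤ u l := humono hkl
      have : u k * (1 + η) ≤ u l + 1 := by linarith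
      exact le_trans (inf_le_left) (le_trans this (le_sup_right))
    intro k l hkl
    rcases lt_or_gt_of_ne hkl with hlt | hgt
    · exact key k l hlt
    · exact (key l k hgt).symm
  have hmeas : ∀ k, MeasurableSet (I k) := fun k => measurableSet_Ioc
  set δ : ℝ := η / (2 * (1 + η)) with hδ
  have hδpos : 0 < δ := by positivity
  have hbound : ∀ k, ENNReal.ofReal δ ≤ ∫⁻ t in I k, ENNReal.ofReal (1 / t) := by
    intro k
    have hηuk : 2 ≤ u k * η := by
      have := hu1 k
      have h2 : 2 / η ≤ u k := by linarith
      calc (2:ℝ) = 2 / η * η := by field_simp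
      _ ≤ u k * η := by nlinarith
    have hb : 0 < u k * (1 + η) := by nlinarith [hupos k]
    calc ENNReal.ofReal δ
        ≤ ENNReal.ofReal (1 / (u k * (1 + η)) * (u k * (1 + η) - (u k + 1))) := by
          apply ENNReal.ofReal_le_ofReal
          rw [hδ, div_le_iff₀ (by positivity), one_div]
          have hexp : (u k * (1 + η))⁻¹ * (u k * (1 + η) - (u k + 1)) * (2 * (1 + η))
              = (u k * η - 1) * (2 * (1 + η)) / (u k * (1 + η)) := by
            field_simp; ring
          rw [hexp, le_div_iff₀ hb]
          nlinarith [hupos k, hη]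
      _ = ENNReal.ofReal (1 / (u k * (1 + η))) * volume (I k) := by
          rw [hI]
          simp only
          rw [Real.volume_Ioc, ← ENNReal.ofReal_mul (by positivity)]
      _ = ∫⁻ _ in I k, ENNReal.ofReal (1 / (u k * (1 + η))) := (setLIntegral_const _ _).symm
      _ ≤ ∫⁻ t in I k, ENNReal.ofReal (1 / t) := by
          apply setLIntegral_mono
          · exact (measurable_const.div measurable_id).ennreal_ofReal
          · intro t ht
            apply ENNReal.ofReal_le_ofReal
            apply one_div_le_one_div_of_le
            · have := hu1 k
              have h0 : 0 < 2 / η := by positivity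
              linarith [ht.1]
            · exact ht.2
  have htop : (∫⁻ t in E, ENNReal.ofReal (1 / t)) = ⊤ := by
    have hsub : (⋃ k, I k) ⊆ E := Set.iUnion_subset hIE
    have h1 : (∫⁻ t in ⋃ k, I k, ENNReal.ofReal (1 / t)) ≤ ∫⁻ t in E, ENNReal.ofReal (1 / t) :=
      lintegral_mono' (Measure.restrict_mono hsub le_rfl) le_rfl
    have h2 : (∫⁻ t in ⋃ k, I k, ENNReal.ofReal (1 / t))
        = ∑' k, ∫⁻ t in I k, ENNReal.ofReal (1 / t) := lintegral_iUnion hmeas hdisj _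
    have h3 : (⊤ : ENNReal) ≤ ∑' k : ℕ, ∫⁻ t in I k, ENNReal.ofReal (1 / t) := by
      calc (⊤ : ENNReal) = ∑' _ : ℕ, ENNReal.ofReal δ :=
            (ENNReal.tsum_const_eq_top_of_ne_zero (by simp [ENNReal.ofReal_eq_zero]; linarith)).symm
      _ ≤ _ := ENNReal.tsum_le_tsum hbound
    exact top_le_iff.mp (h3.trans (h2 ▸ h1))
  exact absurd htop hEfin.ne

/-- If a nondecreasing positive function `T` on `(0,∞)` satisfies
`T(r) ≤ (1 - ε') T(r+1)` for some `ε' > 0` and all `r > 0` outside a set `E` of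
finite logarithmic measure, while `(0,∞) \ E` has infinite logarithmic measure,
then `limsup_{r→∞} log T(r)/log r = ∞`. -/
theorem stmt_19 (T : ℝ → ℝ) (hTpos : ∀ r > (0 : ℝ), 0 < T r)
    (hmono : ∀ ⦃a b : ℝ⦄, 0 < a → a ≤ b → T a ≤ T b)
    (ε' : ℝ) (hε' : 0 < ε')
    (E : Set ℝ)
    (hEfin : (∫⁻ t in E, ENNReal.ofReal (1 / t)) < ⊤)
    (hcompl : (∫⁻ t in Set.Ioi (0 : ℝ) \ E, ENNReal.ofReal (1 / t)) = ⊤)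
    (h : ∀ r > (0 : ℝ), r ∉ E → T r ≤ (1 - ε') * T (r + 1)) :
    ∀ C : ℝ, ∃ᶠ r in Filter.atTop, C < Real.log (T r) / Real.log r := by
  -- Step 0: `1 - ε' > 0`
  have hne : (Set.Ioi (0 : ℝ) \ E).Nonempty := by
    by_contra hc
    rw [Set.not_nonempty_iff_eq_empty] at hc
    rw [hc] at hcompl
    simp at hcompl
  obtain ⟨r0, hr0pos, hr0E⟩ := hne
  have hr0 : (0 : ℝ) < r0 := hr0pos
  have hβpos : 0 < 1 - ε' := by
    by_contra hle
    push_neg at hle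
    have h1 := h r0 hr0 hr0E
    have hT1 := hTpos r0 hr0
    have hT2 := hTpos (r0 + 1) (by linarith)
    nlinarith
  set β : ℝ := 1 - ε' with hβ
  have hβlt : β < 1 := by rw [hβ]; linarith
  set a : ℝ := -Real.log β with ha
  have hapos : 0 < a := by
    rw [ha, neg_pos]
    exact Real.log_neg hβpos hβlt
  intro C
  set D : ℝ := max C 0 + 1 with hD
  have hDpos : (0 : ℝ) < D := by
    have := le_max_right C 0
    rw [hD]; linarith
  have hCD : C < D := by
    have := le_max_left C 0
    rw [hD]; linarith
  set η : ℝ := Real.exp (a / (2 * D)) - 1 with hηdef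
  have haD : 0 < a / (2 * D) := by positivity
  have hη : 0 < η := by
    have := Real.add_one_le_exp (a / (2 * D))
    rw [hηdef]; linarith
  have hlogη : Real.log (1 + η) = a / (2 * D) := by
    rw [hηdef]
    have : 1 + (Real.exp (a / (2 * D)) - 1) = Real.exp (a / (2 * D)) := by ring
    rw [this, Real.log_exp]
  obtain ⟨R, hR1, hR2⟩ := key_window E hEfin η hη
  -- totalize the step function
  have hstep : ∀ s : ℝ, ∃ x, R ≤ s → (x ∈ Set.Ioc (s + 1) (s * (1 + η)) ∧ x ∉ E) := by
    intro s
    by_cases hs : R ≤ s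
    · obtain ⟨x, hx1, hx2⟩ := hR2 s hs
      exact ⟨x, fun _ => ⟨hx1, hx2⟩⟩
    · exact ⟨0, fun hc => absurd hc hs⟩
  choose g hg using hstep
  obtain ⟨x0, hx01, hx02⟩ := hR2 (max R 1) (le_max_left _ _)
  set u : ℕ → ℝ := fun n => Nat.rec x0 (fun _ s => g s) n with hu
  have huS : ∀ n, u (n + 1) = g (u n) := fun n => rfl
  have hQ : ∀ n, max R 1 + 1 < u n ∧ u n ∉ E := by
    intro n
    induction n with
    | zero => exact ⟨hx01.1, hx02⟩
    | succ m ih =>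
      have hRm : R ≤ u m := by
        have := le_max_left R 1
        linarith [ih.1]
      have := hg (u m) hRm
      rw [huS]
      refine ⟨?_, this.2⟩
      have := this.1.1
      linarith [ih.1]
  have hRu : ∀ n, R ≤ u n := by
    intro n
    have := le_max_left R 1
    linarith [(hQ n).1]
  have hugt1 : ∀ n, 1 < u n := by
    intro n
    have := le_max_right R 1
    linarith [(hQ n).1]
  have hupos : ∀ n, 0 < u n := fun n => lt_trans one_pos (hugt1 n)
  have hlow : ∀ n, u n + 1 < u (n + 1) := by
    intro n
    have := (hg (u n) (hRu n)).1.1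
    rw [huS]; exact this
  have hhigh : ∀ n, u (n + 1) ≤ u n * (1 + η) := by
    intro n
    have := (hg (u n) (hRu n)).1.2
    rw [huS]; exact this
  -- chain inequality
  have hT : ∀ n, T (u n) ≤ β * T (u (n + 1)) := by
    intro n
    have h1 := h (u n) (hupos n) ((hQ n).2)
    have h2 : T (u n + 1) ≤ T (u (n + 1)) :=
      hmono (by linarith [hupos n]) (le_of_lt (hlow n))
    calc T (u n) ≤ β * T (u n + 1) := h1
      _ ≤ β * T (u (n + 1)) := by nlinarith
  have hTn : ∀ n, T (u 0) ≤ β ^ n * T (u n) := by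
    intro n
    induction n with
    | zero => simp
    | succ m ih =>
      calc T (u 0) ≤ β ^ m * T (u m) := ih
        _ ≤ β ^ m * (β * T (u (m + 1))) :=
            mul_le_mul_of_nonneg_left (hT m) (pow_nonneg hβpos.le m)
        _ = β ^ (m + 1) * T (u (m + 1)) := by rw [pow_succ]; ring
  have hub : ∀ n, u n ≤ u 0 * (1 + η) ^ n := by
    intro n
    induction n with
    | zero => simp
    | succ m ih =>
      calc u (m + 1) ≤ u m * (1 + η) := hhigh m
        _ ≤ u 0 * (1 + η) ^ m * (1 + η) := by nlinarith
        _ = u 0 * (1 + η) ^ (m + 1) := by rw [pow_succ]; ring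
  have hlb : ∀ n, u 0 + n ≤ u n := by
    intro n
    induction n with
    | zero => simp
    | succ m ih =>
      push_cast
      have := hlow m
      push_cast at ih
      linarith
  have hTupos : ∀ n, 0 < T (u n) := fun n => hTpos (u n) (hupos n)
  have hlogT : ∀ n, Real.log (T (u 0)) + n * a ≤ Real.log (T (u n)) := by
    intro n
    have h1 : Real.log (T (u 0)) ≤ Real.log (β ^ n * T (u n)) :=
      Real.log_le_log (hTupos 0) (hTn n)
    rw [Real.log_mul (pow_ne_zero n (ne_of_gt hβpos)) (ne_of_gt (hTupos n)),
      Real.log_pow] at h1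
    rw [ha] at *
    push_cast at h1 ⊢
    linarith
  have hlogu : ∀ n, Real.log (u n) ≤ Real.log (u 0) + n * (a / (2 * D)) := by
    intro n
    have h1 : Real.log (u n) ≤ Real.log (u 0 * (1 + η) ^ n) :=
      Real.log_le_log (hupos n) (hub n)
    rw [Real.log_mul (ne_of_gt (hupos 0)) (pow_ne_zero n (by positivity)),
      Real.log_pow, hlogη] at h1
    push_cast at h1 ⊢
    linarith
  have hlogupos : ∀ n, 0 < Real.log (u n) := fun n => Real.log_pos (hugt1 n)
  -- conclude
  rw [Filter.frequently_atTop]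
  clear_value β a D η u
  intro b
  set M : ℝ := 2 * (D * Real.log (u 0) - Real.log (T (u 0))) / a with hM
  obtain ⟨n, hn1, hn2⟩ : ∃ n : ℕ, b ≤ (n : ℝ) ∧ M ≤ (n : ℝ) := by
    refine ⟨max ⌈b⌉₊ ⌈M⌉₊, ?_, ?_⟩
    · exact le_trans (Nat.le_ceil b) (by exact_mod_cast le_max_left _ _)
    · exact le_trans (Nat.le_ceil M) (by exact_mod_cast le_max_right _ _)
  refine ⟨u n, ?_, ?_⟩
  · have := hlb n
    linarith [hupos 0]
  · rw [lt_div_iff₀ (hlogupos n)]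
    have hna : 2 * (D * Real.log (u 0) - Real.log (T (u 0))) ≤ n * a := by
      have h1 : M * a ≤ n * a := mul_le_mul_of_nonneg_right hn2 hapos.le
      have h2 : M * a = 2 * (D * Real.log (u 0) - Real.log (T (u 0))) := by
        rw [hM]; field_simp
      linarith
    have hC2 : C * Real.log (u n) < D * Real.log (u n) :=
      mul_lt_mul_of_pos_right hCD (hlogupos n)
    have hm1 : D * Real.log (u n) ≤ D * (Real.log (u 0) + n * (a / (2 * D))) :=
      mul_le_mul_of_nonneg_left (hlogu n) hDpos.le
    have hmid : D * (Real.log (u 0) + n * (a / (2 * D)))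
        = D * Real.log (u 0) + n * a / 2 := by
      field_simp
    have hkey1 := hlogT n
    have hfin : D * Real.log (u 0) + ↑n * a / 2 ≤ Real.log (T (u 0)) + ↑n * a := by
      linarith
    linarith [hC2, hm1, hmid, hfin, hkey1]
end
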